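/- Let N ≥ 2. For every ψ ∈ C_c^∞((0, +∞)), ∫_0^{+∞} (ψ'(r))² r^{N−1} e^{r²/2} dr ≥ (1/4) ∫_0^{+∞} ψ(r)² ρ_N(r)² r^{N−1} e^{r²/2} dr. -/

import Mathlib

open MeasureTheory

/-- `ρ_N(r) = r^{1−N} e^{−r²/2} / ∫_r^{+∞} t^{1−N} e^{−t²/2} dt`. -/
noncomputable def rho (N : ℕ) (r : ℝ) : ℝ :=
  (r ^ (1 - (N : ℝ)) * Real.exp (-r ^ 2 / 2)) /
    ∫ t in Set.Ioi r, t ^ (1 - (N : ℝ)) * Real.exp (-t ^ 2 / 2)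

open Set


noncomputable def hardyF (N : ℕ) (t : ℝ) : ℝ := t ^ (1 - (N:ℝ)) * Real.exp (-t^2/2)
noncomputable def hardyG (N : ℕ) (r : ℝ) : ℝ := ∫ t in Set.Ioi r, hardyF N t

lemma hardyF_cont (N : ℕ) : ContinuousOn (hardyF N) (Set.Ioi 0) := by
  intro t ht
  exact ((Real.continuousAt_rpow_const t _ (Or.inl (ne_of_gt ht))).mul
    (Real.continuous_exp.continuousAt.comp (by fun_prop))).continuousWithinAt

lemma hardyF_pos (N : ℕ) {t : ℝ} (ht : 0 < t) : 0 < hardyF N t :=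
  mul_pos (Real.rpow_pos_of_pos ht _) (Real.exp_pos _)

lemma hardyF_int (N : ℕ) (hN : 1 ≤ N) {r : ℝ} (hr : 0 < r) :
    IntegrableOn (hardyF N) (Set.Ioi r) := by
  have hg : Integrable (fun t : ℝ => r ^ (1 - (N:ℝ)) * Real.exp (-(1/2) * t^2)) := by
    exact (integrable_exp_neg_mul_sq (by norm_num)).const_mul _
  refine Integrable.mono' hg.integrableOn
    ((hardyF_cont N).mono (Set.Ioi_subset_Ioi hr.le) |>.aestronglyMeasurable measurableSet_Ioi) ?_
  filter_upwards [ae_restrict_mem measurableSet_Ioi] with t ht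
  have ht0 : 0 < t := hr.trans ht
  rw [Real.norm_eq_abs, abs_of_pos (hardyF_pos N ht0)]
  have h1 : t ^ (1 - (N:ℝ)) ≤ r ^ (1 - (N:ℝ)) :=
    Real.rpow_le_rpow_of_nonpos hr (le_of_lt ht) (by simp; exact_mod_cast hN)
  have : Real.exp (-t^2/2) = Real.exp (-(1/2) * t^2) := by ring_nf
  rw [hardyF, this]
  exact mul_le_mul_of_nonneg_right h1 (Real.exp_pos _).le

lemma hardyG_pos (N : ℕ) (hN : 1 ≤ N) {r : ℝ} (hr : 0 < r) : 0 < hardyG N r := by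
  rw [hardyG]
  rw [setIntegral_pos_iff_support_of_nonneg_ae ?_ (hardyF_int N hN hr)]
  · have : Set.Ioi r ⊆ Function.support (hardyF N) ∩ Set.Ioi r := fun t ht =>
      ⟨ne_of_gt (hardyF_pos N (hr.trans ht)), ht⟩
    calc (0:ENNReal) < volume (Set.Ioi r) := by simp
      _ ≤ _ := measure_mono this
  · filter_upwards [ae_restrict_mem measurableSet_Ioi] with t ht
    exact (hardyF_pos N (hr.trans ht)).le

lemma hardyG_deriv (N : ℕ) (hN : 1 ≤ N) {r : ℝ} (hr : 0 < r) :
    HasDerivAt (hardyG N) (-(hardyF N r)) r := by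
  have ha : (0:ℝ) < r/2 := by linarith
  have har : r/2 < r := by linarith
  have key : ∀ x ∈ Set.Ioi (r/2), hardyG N x = hardyG N (r/2) - ∫ t in (r/2)..x, hardyF N t := by
    intro x hx
    have hx0 : 0 < x := ha.trans hx
    rw [intervalIntegral.integral_of_le (le_of_lt hx)]
    have hsplit : ∫ t in Set.Ioi (r/2), hardyF N t =
        (∫ t in Set.Ioc (r/2) x, hardyF N t) + ∫ t in Set.Ioi x, hardyF N t := by
      rw [← setIntegral_union (Set.Ioc_disjoint_Ioi le_rfl) measurableSet_Ioi
        ((hardyF_int N hN ha).mono_set Set.Ioc_subset_Ioi_self) (hardyF_int N hN hx0),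
        Set.Ioc_union_Ioi_eq_Ioi (le_of_lt hx)]
    rw [hardyG, hardyG, hsplit]; ring
  have hd : HasDerivAt (fun x => hardyG N (r/2) - ∫ t in (r/2)..x, hardyF N t)
      (-(hardyF N r)) r := by
    refine HasDerivAt.const_sub _ (intervalIntegral.integral_hasDerivAt_right ?_ ?_ ?_)
    · exact intervalIntegrable_iff.mpr ((hardyF_int N hN ha).mono_set (by rw [Set.uIoc_of_le har.le]; exact Set.Ioc_subset_Ioi_self))
    · exact ⟨Set.Ioi 0, Ioi_mem_nhds hr, (hardyF_cont N).aestronglyMeasurable measurableSet_Ioi⟩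
    · exact (hardyF_cont N).continuousAt (Ioi_mem_nhds hr)
  exact hd.congr_of_eventuallyEq (Filter.eventuallyEq_of_mem (Ioi_mem_nhds har) key)


lemma hardy_pointwise {p q F G A B : ℝ} (hF : 0 < F) (hG : 0 < G) (hW : F * (A * B) = 1) :
    (1/4) * (p^2 * (F/G)^2 * A * B) ≤ q^2 * A * B + (p*q/G + p^2*F/(2*G^2)) := by
  have hA : A * B = F⁻¹ := eq_inv_of_mul_eq_one_right hW
  have h2 : q^2*A*B = q^2 * F⁻¹ := by rw [mul_assoc, hA]
  have h3 : p^2*(F/G)^2*A*B = p^2*(F/G)^2*F⁻¹ := by rw [mul_assoc, hA]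
  rw [h2, h3, ← sub_nonneg]
  have key : q^2*F⁻¹ + (p*q/G + p^2*F/(2*G^2)) - (1/4)*(p^2*(F/G)^2*F⁻¹)
      = (q*G + p*F/2)^2/(F*G^2) := by
    field_simp
    ring
  rw [key]
  positivity

noncomputable def hardyD (N : ℕ) (ψ : ℝ → ℝ) (r : ℝ) : ℝ :=
  ψ r * deriv ψ r / hardyG N r + ψ r ^ 2 * hardyF N r / (2 * hardyG N r ^ 2)

set_option maxHeartbeats 1000000 in
/-- One-dimensional Hardy-type inequality: for every `ψ ∈ C_c^∞((0,+∞))`,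
`∫₀^∞ ψ'(r)² r^{N−1} e^{r²/2} dr ≥ (1/4) ∫₀^∞ ψ(r)² ρ_N(r)² r^{N−1} e^{r²/2} dr`. -/
theorem hardy_one_dim (N : ℕ) (hN : 2 ≤ N) (ψ : ℝ → ℝ)
    (hψ : ContDiff ℝ (⊤ : ℕ∞) ψ) (hsupp : HasCompactSupport ψ)
    (hsub : tsupport ψ ⊆ Set.Ioi 0) :
    (1 / 4) * ∫ r in Set.Ioi (0 : ℝ),
        ψ r ^ 2 * rho N r ^ 2 * r ^ (N - 1) * Real.exp (r ^ 2 / 2)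
      ≤ ∫ r in Set.Ioi (0 : ℝ), deriv ψ r ^ 2 * r ^ (N - 1) * Real.exp (r ^ 2 / 2) := by
  have hN1 : 1 ≤ N := le_trans one_le_two hN
  -- bounds for the support
  obtain ⟨c, d, hc, hcd, hK⟩ : ∃ c d : ℝ, 0 < c ∧ c < d ∧ tsupport ψ ⊆ Set.Icc c d := by
    by_cases h : tsupport ψ = ∅
    · exact ⟨1, 2, one_pos, one_lt_two, by simp [h]⟩
    · have hne : (tsupport ψ).Nonempty := Set.nonempty_iff_ne_empty.mpr h
      refine ⟨sInf (tsupport ψ), sSup (tsupport ψ) + 1, hsub (hsupp.sInf_mem hne), ?_, ?_⟩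
      · have := csInf_le_csSup hne hsupp.bddBelow hsupp.bddAbove
        linarith
      · intro x hx
        exact ⟨csInf_le hsupp.bddBelow hx, le_trans (le_csSup hsupp.bddAbove hx) (by linarith)⟩
  obtain ⟨A, B, ha, hab, hac, hdb⟩ : ∃ A B : ℝ, 0 < A ∧ A < B ∧ A < c ∧ d < B :=
    ⟨c/2, d+1, by positivity, by linarith, by linarith, by linarith⟩
  have hsubab : Set.Icc c d ⊆ Set.Icc A B := Set.Icc_subset_Icc (by linarith) (by linarith)
  have hψ0 : ∀ r, r ∉ Set.Icc c d → ψ r = 0 := fun r hr =>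
    image_eq_zero_of_notMem_tsupport (fun h => hr (hK h))
  have hψ'0 : ∀ r, r ∉ Set.Icc c d → deriv ψ r = 0 := fun r hr =>
    Function.notMem_support.mp (fun h => hr (hK (support_deriv_subset h)))
  have hψc : Continuous ψ := hψ.continuous
  have hψ'c : Continuous (deriv ψ) := hψ.continuous_deriv (by simp)
  have hGne : ∀ r ∈ Set.Ioi (0:ℝ), hardyG N r ≠ 0 := fun r hr => (hardyG_pos N hN1 hr).ne'
  have hGcont : ContinuousOn (hardyG N) (Set.Ioi 0) := fun r hr =>
    ((hardyG_deriv N hN1 hr).continuousAt).continuousWithinAt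
  -- continuity of D
  have hDcont : ContinuousOn (hardyD N ψ) (Set.Ioi 0) := by
    apply ContinuousOn.add
    · exact ((hψc.mul hψ'c).continuousOn).div hGcont hGne
    · refine (((hψc.pow 2).continuousOn.mul (hardyF_cont N)).div
        (continuousOn_const.mul (hGcont.pow 2)) ?_)
      intro r hr
      have := hardyG_pos N hN1 hr
      positivity
  -- D vanishes outside [c,d]
  have hD0 : ∀ r, r ∉ Set.Icc c d → hardyD N ψ r = 0 := by
    intro r hr
    simp [hardyD, hψ0 r hr]
  -- derivative formula
  have hFd : ∀ r ∈ Set.Ioi (0:ℝ),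
      HasDerivAt (fun x => ψ x ^ 2 * (2 * hardyG N x)⁻¹) (hardyD N ψ r) r := by
    intro r hr
    have hGpos := hardyG_pos N hN1 hr
    have h2 : (2 * hardyG N r) ≠ 0 := by positivity
    have hψd := (hψ.differentiable (by simp) r).hasDerivAt
    have h := (hψd.pow 2).mul (((hardyG_deriv N hN1 hr).const_mul 2).inv h2)
    refine h.congr_deriv ?_
    simp only [Pi.inv_apply, Pi.pow_apply]
    rw [hardyD]
    field_simp
    ring
  -- ∫ D over Ioi 0 is zero
  have hDzero : ∫ r in Set.Ioi (0:ℝ), hardyD N ψ r = 0 := by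
    have e1 : ∫ r in Set.Ioi (0:ℝ), hardyD N ψ r = ∫ r, hardyD N ψ r := by
      apply setIntegral_eq_integral_of_forall_compl_eq_zero
      intro r hr
      exact hD0 r (fun h => hr (lt_of_lt_of_le hc h.1))
    have e2 : ∫ r in Set.Ioc A B, hardyD N ψ r = ∫ r, hardyD N ψ r := by
      apply setIntegral_eq_integral_of_forall_compl_eq_zero
      intro r hr
      refine hD0 r (fun h => hr ?_)
      exact ⟨lt_of_lt_of_le hac h.1, le_trans h.2 hdb.le⟩
    rw [e1, ← e2, ← intervalIntegral.integral_of_le hab.le]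
    have hIcc : Set.uIcc A B = Set.Icc A B := Set.uIcc_of_le hab.le
    have hftc := intervalIntegral.integral_eq_sub_of_hasDerivAt
      (f := fun x => ψ x ^ 2 * (2 * hardyG N x)⁻¹) (f' := hardyD N ψ) (a := A) (b := B)
      (fun x hx => hFd x (by rw [hIcc] at hx; exact lt_of_lt_of_le ha hx.1))
      ((hDcont.mono (show Set.uIcc A B ⊆ Set.Ioi 0 by rw [hIcc]; exact fun x hx => lt_of_lt_of_le ha hx.1)).intervalIntegrable)
    rw [hftc]
    have h1 : ψ A = 0 := hψ0 A (fun h => (not_le.mpr hac) h.1)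
    have h2 : ψ B = 0 := hψ0 B (fun h => (not_le.mpr hdb) h.2)
    simp [h1, h2]
  -- pointwise inequality
  have hpt : ∀ r ∈ Set.Ioi (0:ℝ),
      1/4 * (ψ r ^ 2 * rho N r ^ 2 * r ^ (N - 1) * Real.exp (r ^ 2 / 2))
        ≤ deriv ψ r ^ 2 * r ^ (N - 1) * Real.exp (r ^ 2 / 2) + hardyD N ψ r := by
    intro r hr
    have hr' : (0:ℝ) < r := hr
    have hrho : rho N r = hardyF N r / hardyG N r := rfl
    have h1 : (r:ℝ) ^ (N - 1) = r ^ ((N:ℝ) - 1) := by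
      rw [← Real.rpow_natCast r (N-1), Nat.cast_sub hN1, Nat.cast_one]
    have hP : hardyF N r * ((r:ℝ) ^ (N-1) * Real.exp (r^2/2)) = 1 := by
      rw [hardyF, h1, mul_mul_mul_comm, ← Real.rpow_add hr', ← Real.exp_add]
      norm_num
      ring
    rw [hrho, hardyD]
    exact hardy_pointwise (hardyF_pos N hr') (hardyG_pos N hN1 hr') hP
  -- integrability
  have haint : IntegrableOn (fun r => deriv ψ r ^ 2 * r ^ (N - 1) * Real.exp (r ^ 2 / 2))
      (Set.Ioi 0) := by
    apply Integrable.integrableOn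
    apply Continuous.integrable_of_hasCompactSupport
    · exact ((hψ'c.pow 2).mul (continuous_pow _)).mul (Real.continuous_exp.comp (by fun_prop))
    · apply hsupp.deriv.mono'
      intro x hx
      apply subset_tsupport
      simp only [Function.mem_support, ne_eq] at hx ⊢
      intro h
      apply hx
      simp [h]
  have extend : ∀ g : ℝ → ℝ, ContinuousOn g (Set.Ioi 0) →
      (∀ r, r ∉ Set.Icc c d → g r = 0) → IntegrableOn g (Set.Ioi 0) := by
    intro g hgc hg0
    have h1 : IntegrableOn g (Set.Icc A B) :=
      (hgc.mono (fun x hx => lt_of_lt_of_le ha hx.1)).integrableOn_compact isCompact_Icc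
    have h2 : IntegrableOn g (Set.Ioi 0 \ Set.Icc A B) := by
      rw [integrableOn_congr_fun (g := fun _ => (0:ℝ)) ?_ (measurableSet_Ioi.diff measurableSet_Icc)]
      · exact integrableOn_zero
      · intro x hx
        exact hg0 x (fun h => hx.2 (hsubab h))
    exact (h2.union h1).mono_set (fun x hx => by
      by_cases h : x ∈ Set.Icc A B
      · exact Or.inr h
      · exact Or.inl ⟨hx, h⟩)
  have hbint : IntegrableOn
      (fun r => ψ r ^ 2 * rho N r ^ 2 * r ^ (N - 1) * Real.exp (r ^ 2 / 2)) (Set.Ioi 0) := by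
    apply extend _ ?_ (fun r hr => by simp [hψ0 r hr])
    have hrhoc : ContinuousOn (rho N) (Set.Ioi 0) :=
      ContinuousOn.congr ((hardyF_cont N).div hGcont hGne) (fun r _ => rfl)
    exact ((((hψc.pow 2).continuousOn.mul (hrhoc.pow 2)).mul
      (continuous_pow _).continuousOn).mul (Real.continuous_exp.comp (by fun_prop)).continuousOn)
  have hDint : IntegrableOn (hardyD N ψ) (Set.Ioi 0) := extend _ hDcont hD0
  -- conclude
  have step1 : (1/4) * (∫ r in Set.Ioi (0:ℝ),
        ψ r ^ 2 * rho N r ^ 2 * r ^ (N - 1) * Real.exp (r ^ 2 / 2))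
      = ∫ r in Set.Ioi (0:ℝ),
        1/4 * (ψ r ^ 2 * rho N r ^ 2 * r ^ (N - 1) * Real.exp (r ^ 2 / 2)) := by
    rw [integral_const_mul]
  have step2 : (∫ r in Set.Ioi (0:ℝ),
        1/4 * (ψ r ^ 2 * rho N r ^ 2 * r ^ (N - 1) * Real.exp (r ^ 2 / 2)))
      ≤ ∫ r in Set.Ioi (0:ℝ),
        (deriv ψ r ^ 2 * r ^ (N - 1) * Real.exp (r ^ 2 / 2) + hardyD N ψ r) :=
    setIntegral_mono_on (hbint.const_mul (1/4)) (haint.add hDint) measurableSet_Ioi hpt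
  have step3 : (∫ r in Set.Ioi (0:ℝ),
        (deriv ψ r ^ 2 * r ^ (N - 1) * Real.exp (r ^ 2 / 2) + hardyD N ψ r))
      = (∫ r in Set.Ioi (0:ℝ), deriv ψ r ^ 2 * r ^ (N - 1) * Real.exp (r ^ 2 / 2))
        + ∫ r in Set.Ioi (0:ℝ), hardyD N ψ r := integral_add haint hDint
  rw [step1]
  refine le_trans step2 ?_
  rw [step3, hDzero, add_zero]
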